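/- Let m ≥ 3 be odd and let d be an integer with gcd(d, 2^m - 1) = 1 such that the power function x ↦ x^d on F = GF(2^m) is maximum nonlinear. Then for every α ∈ F \ {0}, the cardinality |D_d ∩ H^0(α)| belongs to the set {2^(m-2), 2^(m-2) - 2^((m-3)/2), 2^(m-2) + 2^((m-3)/2)}. -/

import Mathlib

attribute [local instance] Classical.propDecidable

noncomputable instance (m : ℕ) : Fintype (GaloisField 2 m) := Fintype.ofFinite _

/-- The absolute trace map from `GF(2^m)` to `GF(2)`. -/
noncomputable def tr (m : ℕ) (x : GaloisField 2 m) : ZMod 2 :=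
  Algebra.trace (ZMod 2) (GaloisField 2 m) x

/-- `(-1)^t` as an integer, for `t ∈ GF(2)`. -/
def chi (t : ZMod 2) : ℤ := (-1) ^ t.val

/-- The Walsh coefficient `∑_{x ∈ F} (-1)^(tr(γx + βx^d))` of the power map `x ↦ x^d`. -/
noncomputable def walsh (m d : ℕ) (β γ : GaloisField 2 m) : ℤ :=
  ∑ x : GaloisField 2 m, chi (tr m (γ * x + β * x ^ d))

/-- The power function `x ↦ x^d` on `GF(2^m)` is maximum nonlinear (almost bent). -/
def MaxNonlinear (m d : ℕ) : Prop :=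
  ∀ β : GaloisField 2 m, β ≠ 0 → ∀ γ : GaloisField 2 m,
    walsh m d β γ ∈ ({0, 2 ^ ((m + 1) / 2), -(2 ^ ((m + 1) / 2))} : Set ℤ)

/-- `D_d = {x ∈ F : tr(x^d) = 1}`. -/
noncomputable def Dd (m d : ℕ) : Finset (GaloisField 2 m) :=
  Finset.univ.filter (fun x => tr m (x ^ d) = 1)

/-- `H^i(α) = {x ∈ F : tr(αx) = i}`. -/
noncomputable def Hi (m : ℕ) (α : GaloisField 2 m) (i : ZMod 2) :
    Finset (GaloisField 2 m) :=
  Finset.univ.filter (fun x => tr m (α * x) = i)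

/-- `H^{i,j}(α,β) = {x ∈ F : tr(αx) = i and tr(βx) = j}`. -/
noncomputable def Hij (m : ℕ) (α β : GaloisField 2 m) (i j : ZMod 2) :
    Finset (GaloisField 2 m) :=
  Finset.univ.filter (fun x => tr m (α * x) = i ∧ tr m (β * x) = j)

/-!
The indicator of `D_d ∩ H^0(α)` is `(1 - χ(tr x^d)) (1 + χ(tr αx)) / 4`. Expanding the product and
summing over `F`, the sums of `χ(tr αx)` and `χ(tr x^d)` vanish (`x ↦ αx` and `x ↦ x^d` permute `F`,
and a nonzero character sums to zero), so `4 |D_d ∩ H^0(α)| = 2^m - W(1, α)`, where `W(1, α)` is a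
Walsh coefficient. Almost bentness puts `W(1, α)` in `{0, ±2^((m+1)/2)}`.
-/

open Finset

lemma chi_add (a b : ZMod 2) : chi (a + b) = chi a * chi b := by revert a b; decide

lemma chi_add_one (a : ZMod 2) : chi (a + 1) = -chi a := by revert a; decide

lemma one_sub_chi_mul_one_add_chi (a b : ZMod 2) :
    (1 - chi a) * (1 + chi b) = if a = 1 ∧ b = 0 then 4 else 0 := by
  revert a b; decide

lemma sum_chi_eq_zero {G : Type*} [AddCommGroup G] [Fintype G] (φ : G →+ ZMod 2)
    (hφ : Function.Surjective φ) : ∑ x, chi (φ x) = 0 := by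
  obtain ⟨y, hy⟩ := hφ 1
  have hneg : ∑ x, chi (φ x) = -∑ x, chi (φ x) := by
    calc ∑ x, chi (φ x) = ∑ x, chi (φ (x + y)) := (Fintype.sum_equiv (Equiv.addRight y) _ _
            fun _ => rfl).symm
      _ = -∑ x, chi (φ x) := by simp only [map_add, hy, chi_add_one, sum_neg_distrib]
  linarith

theorem FiniteField.pow_bijective_of_coprime {K : Type*} [Field K] [Fintype K] {d : ℕ}
    (hd0 : d ≠ 0) (hd : Nat.Coprime d (Fintype.card K - 1)) :
    Function.Bijective fun x : K => x ^ d := by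
  have hunits : (Nat.card Kˣ).Coprime d := by
    rw [Nat.card_eq_fintype_card, Fintype.card_units]
    exact hd.symm
  refine Finite.injective_iff_bijective.mp fun x y hxy => ?_
  rcases eq_or_ne x 0 with rfl | hx
  · rw [zero_pow hd0, eq_comm, pow_eq_zero_iff hd0] at hxy
    exact hxy.symm
  rcases eq_or_ne y 0 with rfl | hy
  · rwa [zero_pow hd0, pow_eq_zero_iff hd0] at hxy
  have := (powCoprime hunits).injective (a₁ := Units.mk0 x hx) (a₂ := Units.mk0 y hy)
    (Units.ext (by simpa [powCoprime_apply] using hxy))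
  simpa using congrArg Units.val this

section TraceCharacterSums

variable (m : ℕ)

lemma tr_add (x y : GaloisField 2 m) : tr m (x + y) = tr m x + tr m y :=
  map_add _ x y

lemma sum_chi_tr : ∑ x : GaloisField 2 m, chi (tr m x) = 0 :=
  sum_chi_eq_zero (Algebra.trace (ZMod 2) (GaloisField 2 m)).toAddMonoidHom
    (Algebra.trace_surjective _ _)

lemma sum_chi_tr_of_bijective {f : GaloisField 2 m → GaloisField 2 m}
    (hf : Function.Bijective f) : ∑ x, chi (tr m (f x)) = 0 := by
  rw [Fintype.sum_bijective f hf _ (fun y => chi (tr m y)) fun _ => rfl, sum_chi_tr]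

lemma four_mul_card_Dd_inter_Hi_zero (hm : m ≠ 0) {d : ℕ}
    (hd : Function.Bijective fun x : GaloisField 2 m => x ^ d) {α : GaloisField 2 m}
    (hα : α ≠ 0) :
    4 * ((Dd m d ∩ Hi m α 0).card : ℤ) = 2 ^ m - walsh m d 1 α := by
  have hindicator : 4 * ((Dd m d ∩ Hi m α 0).card : ℤ) =
      ∑ x, (1 - chi (tr m (x ^ d))) * (1 + chi (tr m (α * x))) := by
    simp only [one_sub_chi_mul_one_add_chi, ← sum_filter, sum_const]
    rw [mul_comm]
    congr 3
    ext x
    simp [Dd, Hi]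
  have hexpand : ∀ x : GaloisField 2 m,
      (1 - chi (tr m (x ^ d))) * (1 + chi (tr m (α * x))) =
        1 + chi (tr m (α * x)) - chi (tr m (x ^ d)) - chi (tr m (α * x + 1 * x ^ d)) := by
    intro x
    rw [one_mul, tr_add, chi_add]
    ring
  rw [hindicator, sum_congr rfl fun x _ => hexpand x, sum_sub_distrib, sum_sub_distrib,
    sum_add_distrib, sum_chi_tr_of_bijective m (mulLeft_bijective₀ α hα),
    sum_chi_tr_of_bijective m hd, ← walsh, sum_const, card_univ,
    ← Nat.card_eq_fintype_card, GaloisField.card 2 m hm]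
  ring

end TraceCharacterSums

theorem stmt14_general (m : ℕ) (hm3 : 3 ≤ m) (d : ℕ)
    (hgcd : Nat.gcd d (2 ^ m - 1) = 1) (hmax : MaxNonlinear m d) :
    ∀ α : GaloisField 2 m, α ≠ 0 →
      ((Dd m d ∩ Hi m α 0).card : ℤ) ∈
        ({2 ^ (m - 2), 2 ^ (m - 2) - 2 ^ ((m - 3) / 2),
          2 ^ (m - 2) + 2 ^ ((m - 3) / 2)} : Set ℤ) := by
  intro α hα
  have hcard : Fintype.card (GaloisField 2 m) = 2 ^ m := by
    rw [← Nat.card_eq_fintype_card, GaloisField.card 2 m (by omega)]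
  have hd0 : d ≠ 0 := by
    rintro rfl
    have : 2 ^ 3 ≤ 2 ^ m := Nat.pow_le_pow_right two_pos hm3
    rw [Nat.gcd_zero_left] at hgcd
    omega
  have hbij := FiniteField.pow_bijective_of_coprime hd0 (by rwa [hcard])
  have hcount := four_mul_card_Dd_inter_Hi_zero m (by omega) hbij hα
  have h2m : (2 : ℤ) ^ m = 4 * 2 ^ (m - 2) := by
    rw [show m = m - 2 + 2 by omega, pow_add]; norm_num [mul_comm]
  have h2h : (2 : ℤ) ^ ((m + 1) / 2) = 4 * 2 ^ ((m - 3) / 2) := by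
    rw [show (m + 1) / 2 = (m - 3) / 2 + 2 by omega, pow_add]; norm_num [mul_comm]
  have hW := hmax 1 one_ne_zero α
  simp only [Set.mem_insert_iff, Set.mem_singleton_iff] at hW ⊢
  rcases hW with hW | hW | hW
  · left; linarith
  · right; left; linarith
  · right; right; linarith

/-- For a maximum nonlinear power map `x ↦ x^d` on `GF(2^m)` (`m ≥ 3` odd,
`gcd(d, 2^m - 1) = 1`), every intersection of `D_d` with a hyperplane `H^0(α)`, `α ≠ 0`,
has size `2^(m-2)` or `2^(m-2) ± 2^((m-3)/2)`. -/
theorem stmt14 (m : ℕ) (hm3 : 3 ≤ m) (hmodd : Odd m) (d : ℕ)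
    (hgcd : Nat.gcd d (2 ^ m - 1) = 1) (hmax : MaxNonlinear m d) :
    ∀ α : GaloisField 2 m, α ≠ 0 →
      ((Dd m d ∩ Hi m α 0).card : ℤ) ∈
        ({2 ^ (m - 2), 2 ^ (m - 2) - 2 ^ ((m - 3) / 2),
          2 ^ (m - 2) + 2 ^ ((m - 3) / 2)} : Set ℤ) :=
  stmt14_general m hm3 d hgcd hmax
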